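/- arXiv:2108.03277 — 4 statements merged into one kernel-verified Lean document; each statement's English description precedes it below -/
import Mathlib

section
/- Let {(p^k, x^k)}_{k=1}^K be an individual dataset and x̄ ∈ ℝ^m_+ an arbitrary bundle. Augment the direct revealed preference relations by declaring x̄ ⪰^R x^k for every k, x^k ⪰^R x̄ whenever p^k·(x̄ − x^k) ≤ 0, and x^k ≻^R x̄ whenever p^k·(x̄ − x^k) < 0, and let ⪰^I, ≻^I be the corresponding indirect (transitive-closure) relations. Then there exists an increasing, explicitly quasiconcave utility u rationalizing the dataset with u(x̄) ≥ max{u(x^k) : 1 ≤ k ≤ K} if and only if, for the augmented relations: (1) GARP is satisfied, and (2) there is no bundle y ≤ x̄ that strictly dominates x̄. -/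
/-!
If `u` rationalizes the data and ranks `xb` above every `x k`, then `u a ≥ u b` whenever `a` is
(augmented, indirectly) revealed preferred to `b`, strictly so for the strict relation. This gives GARP,
and explicit quasiconcavity makes a strictly dominating convex combination strictly better than
`xb`, which is impossible for a bundle below `xb`.

Conversely, treat `xb` as one more observation, made at zero prices. GARP for the augmented
relations says exactly that the Afriat matrix `A i j = p i ⬝ (x j - x i)` of the enlarged data is
cyclically consistent, so the Afriat inequalities `U i ≤ U j + λ j * A j i` have a solution with
`λ > 0`; it is built by induction, peeling off a bottom class of the revealed preference. Then
`u z = min_k (U k + λ k * p k ⬝ (z - x k))`, the minimum over the genuine observations, is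
concave, increasing and rationalizes the data, and `u xb ≥ U xb ≥ U k = u (x k)`.
-/

open Finset

/-- The dot product of two vectors in `ℝ^m`. -/
def dot {m : ℕ} (p x : Fin m → ℝ) : ℝ := ∑ j, p j * x j

/-- `x ≪ y`: strictly smaller in every component. -/
def StrLt {m : ℕ} (x y : Fin m → ℝ) : Prop := ∀ j, x j < y j

/-- An increasing utility on the nonnegative orthant. -/
def Incr {m : ℕ} (u : (Fin m → ℝ) → ℝ) : Prop :=
  (∀ x y : Fin m → ℝ, 0 ≤ x → x ≤ y → u x ≤ u y) ∧
  (∀ x y : Fin m → ℝ, 0 ≤ x → StrLt x y → u x < u y)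

/-- `u` rationalizes the individual dataset `{(p k, x k)}` : `u` is increasing and
any bundle strictly better than `x k` is more expensive at prices `p k`. -/
def Rationalizes {m K : ℕ} (p x : Fin K → Fin m → ℝ) (u : (Fin m → ℝ) → ℝ) : Prop :=
  Incr u ∧ ∀ k, ∀ z : Fin m → ℝ, 0 ≤ z → u (x k) < u z → dot (p k) (x k) < dot (p k) z

/-- Direct revealed preference. -/
def RP {m K : ℕ} (p x : Fin K → Fin m → ℝ) (a b : Fin m → ℝ) : Prop :=
  0 ≤ a ∧ 0 ≤ b ∧ (a = b ∨ ∃ k, x k ≤ a ∧ dot (p k) b ≤ dot (p k) (x k))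

/-- Direct strict revealed preference. -/
def SRP {m K : ℕ} (p x : Fin K → Fin m → ℝ) (a b : Fin m → ℝ) : Prop :=
  0 ≤ a ∧ 0 ≤ b ∧
    ((∃ a', StrLt a' a ∧ RP p x a' b) ∨ ∃ k, x k ≤ a ∧ dot (p k) b < dot (p k) (x k))

/-- Indirect revealed preference: the transitive closure of `RP`. -/
def IRP {m K : ℕ} (p x : Fin K → Fin m → ℝ) : (Fin m → ℝ) → (Fin m → ℝ) → Prop :=
  Relation.TransGen (RP p x)

/-- Indirect strict revealed preference: a finite `RP`-chain with at least one strict link. -/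
def SIRP {m K : ℕ} (p x : Fin K → Fin m → ℝ) (a b : Fin m → ℝ) : Prop :=
  ∃ c d, Relation.ReflTransGen (RP p x) a c ∧ SRP p x c d ∧ Relation.ReflTransGen (RP p x) d b

/-- Quasiconcavity on the nonnegative orthant. -/
def QuasiconcaveOn' {m : ℕ} (u : (Fin m → ℝ) → ℝ) : Prop :=
  ∀ x y : Fin m → ℝ, 0 ≤ x → 0 ≤ y → ∀ t : ℝ, 0 < t → t < 1 →
    min (u x) (u y) ≤ u (t • x + (1 - t) • y)

/-- Explicit quasiconcavity on the nonnegative orthant. -/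
def ExplQuasiconcaveOn' {m : ℕ} (u : (Fin m → ℝ) → ℝ) : Prop :=
  QuasiconcaveOn' u ∧
  ∀ x y : Fin m → ℝ, 0 ≤ x → 0 ≤ y → u x ≠ u y → ∀ t : ℝ, 0 < t → t < 1 →
    min (u x) (u y) < u (t • x + (1 - t) • y)

/-- `y` weakly dominates `xb` with respect to a (weak) relation `Rw`: `y` is a convex
combination of bundles each related to `xb` by `Rw`. -/
def WeakDomRel {m : ℕ} (Rw : (Fin m → ℝ) → (Fin m → ℝ) → Prop) (y xb : Fin m → ℝ) : Prop :=
  ∃ (L : ℕ) (lam : Fin L → ℝ) (z : Fin L → Fin m → ℝ),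
    (∀ l, 0 ≤ lam l) ∧ (∑ l, lam l) = 1 ∧ (∀ l, 0 ≤ z l) ∧
    y = ∑ l, lam l • z l ∧ (∀ l, Rw (z l) xb)

/-- `y` strictly dominates `xb`: weak domination, where moreover some bundle receiving
positive weight is related to `xb` by the strict relation `Rs`. -/
def StrictDomRel {m : ℕ} (Rw Rs : (Fin m → ℝ) → (Fin m → ℝ) → Prop) (y xb : Fin m → ℝ) :
    Prop :=
  ∃ (L : ℕ) (lam : Fin L → ℝ) (z : Fin L → Fin m → ℝ),
    (∀ l, 0 ≤ lam l) ∧ (∑ l, lam l) = 1 ∧ (∀ l, 0 ≤ z l) ∧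
    y = ∑ l, lam l • z l ∧ (∀ l, Rw (z l) xb) ∧ (∃ l, 0 < lam l ∧ Rs (z l) xb)

/-- The direct revealed preference augmented by a hypothetical bundle `xb`:
we add `xb ⪰^R x k` for every `k`, and `x k ⪰^R xb` whenever `p k ⬝ (xb - x k) ≤ 0`. -/
def RPa {m K : ℕ} (p x : Fin K → Fin m → ℝ) (xb : Fin m → ℝ) (a b : Fin m → ℝ) : Prop :=
  RP p x a b ∨
    (0 ≤ a ∧ 0 ≤ b ∧ a = xb ∧ ∃ k, b = x k) ∨
    (0 ≤ a ∧ 0 ≤ b ∧ b = xb ∧ ∃ k, a = x k ∧ dot (p k) (xb - x k) ≤ 0)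

/-- The direct strict revealed preference augmented by a hypothetical bundle `xb`:
we add `x k ≻^R xb` whenever `p k ⬝ (xb - x k) < 0`. -/
def SRPa {m K : ℕ} (p x : Fin K → Fin m → ℝ) (xb : Fin m → ℝ) (a b : Fin m → ℝ) : Prop :=
  (0 ≤ a ∧ 0 ≤ b ∧
    ((∃ a', StrLt a' a ∧ RPa p x xb a' b) ∨ ∃ k, x k ≤ a ∧ dot (p k) b < dot (p k) (x k))) ∨
  (0 ≤ a ∧ 0 ≤ b ∧ b = xb ∧ ∃ k, a = x k ∧ dot (p k) (xb - x k) < 0)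

/-- Augmented indirect revealed preference. -/
def IRPa {m K : ℕ} (p x : Fin K → Fin m → ℝ) (xb : Fin m → ℝ) :
    (Fin m → ℝ) → (Fin m → ℝ) → Prop :=
  Relation.TransGen (RPa p x xb)

/-- Augmented indirect strict revealed preference. -/
def SIRPa {m K : ℕ} (p x : Fin K → Fin m → ℝ) (xb : Fin m → ℝ) (a b : Fin m → ℝ) : Prop :=
  ∃ c d, Relation.ReflTransGen (RPa p x xb) a c ∧ SRPa p x xb c d ∧
    Relation.ReflTransGen (RPa p x xb) d b

section Dot

variable {m : ℕ}

theorem dot_add (p a b : Fin m → ℝ) : dot p (a + b) = dot p a + dot p b := dotProduct_add ..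

theorem dot_sub (p a b : Fin m → ℝ) : dot p (a - b) = dot p a - dot p b := dotProduct_sub ..

theorem dot_smul (p : Fin m → ℝ) (c : ℝ) (a : Fin m → ℝ) :
    dot p (c • a) = c * dot p a :=
  dotProduct_smul ..

theorem dot_nonneg {p z : Fin m → ℝ} (hp : 0 ≤ p) (hz : 0 ≤ z) : 0 ≤ dot p z :=
  dotProduct_nonneg_of_nonneg hp hz

theorem dot_le_dot {p a b : Fin m → ℝ} (hp : 0 ≤ p) (hab : a ≤ b) : dot p a ≤ dot p b :=
  dotProduct_le_dotProduct_of_nonneg_left hab hp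

theorem dot_lt_dot {p a b : Fin m → ℝ} (hp : 0 ≤ p) (hp0 : p ≠ 0) (hab : StrLt a b) :
    dot p a < dot p b := by
  obtain ⟨j, hj⟩ := Function.ne_iff.mp hp0
  exact Finset.sum_lt_sum (fun i _ => mul_le_mul_of_nonneg_left (hab i).le (hp i))
    ⟨j, Finset.mem_univ j, mul_lt_mul_of_pos_left (hab j) (lt_of_le_of_ne (hp j) (Ne.symm hj))⟩

theorem incr_dot {q : Fin m → ℝ} (hq : 0 ≤ q) (hq0 : q ≠ 0) : Incr (dot q) :=
  ⟨fun _ _ _ hab => dot_le_dot hq hab, fun _ _ _ hab => dot_lt_dot hq hq0 hab⟩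

end Dot

section Quasiconcave

variable {m : ℕ} {u : (Fin m → ℝ) → ℝ}

theorem ConcaveOn.explQuasiconcaveOn' (hu : ConcaveOn ℝ (Set.Ici 0) u) :
    ExplQuasiconcaveOn' u := by
  have key : ∀ x y : Fin m → ℝ, 0 ≤ x → 0 ≤ y → ∀ t : ℝ, 0 < t → t < 1 →
      t * u x + (1 - t) * u y ≤ u (t • x + (1 - t) • y) := fun x y hx hy t ht0 ht1 =>
    hu.2 hx hy ht0.le (by linarith) (by ring)
  refine ⟨fun x y hx hy t ht0 ht1 => le_trans ?_ (key x y hx hy t ht0 ht1),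
    fun x y hx hy hxy t ht0 ht1 => lt_of_lt_of_le ?_ (key x y hx hy t ht0 ht1)⟩
  · rcases le_total (u x) (u y) with h | h
    · rw [min_eq_left h]; nlinarith
    · rw [min_eq_right h]; nlinarith
  · rcases hxy.lt_or_gt with h | h
    · rw [min_eq_left h.le]; nlinarith
    · rw [min_eq_right h.le]; nlinarith

theorem QuasiconcaveOn'.quasiconcaveOn (hu : QuasiconcaveOn' u) :
    QuasiconcaveOn ℝ (Set.Ici 0) u := by
  intro v
  refine convex_iff_forall_pos.mpr fun x hx y hy a b ha hb hab => ?_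
  obtain rfl : b = 1 - a := by linarith
  refine ⟨?_, le_trans (le_min hx.2 hy.2) (hu x y hx.1 hy.1 a ha (by linarith))⟩
  exact add_nonneg (smul_nonneg ha.le (Set.mem_Ici.mp hx.1))
    (smul_nonneg hb.le (Set.mem_Ici.mp hy.1))

theorem ExplQuasiconcaveOn'.lt_apply_combo (hu : ExplQuasiconcaveOn' u) {v : ℝ}
    {x y : Fin m → ℝ} (hx : 0 ≤ x) (hy : 0 ≤ y) (hvx : v < u x) (hvy : v ≤ u y) {t : ℝ}
    (ht0 : 0 < t) (ht1 : t < 1) : v < u (t • x + (1 - t) • y) := by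
  by_cases hxy : u x = u y
  · exact lt_of_lt_of_le (by rwa [← hxy, min_self]) (hu.1 x y hx hy t ht0 ht1)
  · exact lt_of_le_of_lt (le_min hvx.le hvy) (hu.2 x y hx hy hxy t ht0 ht1)

theorem ExplQuasiconcaveOn'.lt_apply_sum {L : ℕ} (hu : ExplQuasiconcaveOn' u) {v : ℝ}
    {lam : Fin L → ℝ} {z : Fin L → Fin m → ℝ} (hlam : ∀ l, 0 ≤ lam l)
    (hsum : ∑ l, lam l = 1) (hz : ∀ l, 0 ≤ z l) (hv : ∀ l, v ≤ u (z l)) {l₀ : Fin L}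
    (hl₀ : 0 < lam l₀) (hvl₀ : v < u (z l₀)) : v < u (∑ l, lam l • z l) := by
  -- split off half of the weight of `z l₀`; what remains is a convex combination `w`
  set t := lam l₀ / 2 with ht
  have ht1 : t < 1 := by
    have := Finset.single_le_sum (fun l _ => hlam l) (Finset.mem_univ l₀); linarith
  let μ : Fin L → ℝ := fun l => (lam l - if l = l₀ then t else 0) / (1 - t)
  have hμ : ∀ l, 0 ≤ μ l := fun l => div_nonneg (by grind) (by linarith)
  have hμsum : ∑ l, μ l = 1 := by
    rw [← Finset.sum_div, Finset.sum_sub_distrib, Finset.sum_ite_eq' Finset.univ l₀, hsum,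
      if_pos (Finset.mem_univ _), div_self (by linarith)]
  set w := ∑ l, μ l • z l
  have hw : w ∈ {y ∈ Set.Ici 0 | v ≤ u y} :=
    (hu.1.quasiconcaveOn v).sum_mem (fun l _ => hμ l) hμsum fun l _ => ⟨hz l, hv l⟩
  have hsplit : ∑ l, lam l • z l = t • z l₀ + (1 - t) • w := by
    simp only [w, μ, Finset.smul_sum, smul_smul, mul_div_cancel₀ _ (sub_ne_zero.mpr ht1.ne'),
      sub_smul, Finset.sum_sub_distrib, ite_smul, zero_smul, Finset.sum_ite_eq',
      Finset.mem_univ, if_true]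
    abel
  rw [hsplit]
  exact hu.lt_apply_combo (hz l₀) hw.1 hvl₀ hw.2 (by positivity) ht1

end Quasiconcave

def AugGARP {m K : ℕ} (p x : Fin K → Fin m → ℝ) (xb : Fin m → ℝ) : Prop :=
  ¬∃ a b : Fin m → ℝ, IRPa p x xb a b ∧ SIRPa p x xb b a

section Rationalizes

variable {m K : ℕ} {p x : Fin K → Fin m → ℝ} {u : (Fin m → ℝ) → ℝ}

theorem Rationalizes.le_of_dot_le (hu : Rationalizes p x u) (k : Fin K) {z : Fin m → ℝ}
    (hz : 0 ≤ z) (h : dot (p k) z ≤ dot (p k) (x k)) : u z ≤ u (x k) :=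
  not_lt.mp fun hlt => (hu.2 k z hz hlt).not_ge h

theorem Rationalizes.lt_of_dot_lt (hu : Rationalizes p x u) (hp : ∀ k, 0 ≤ p k) (k : Fin K)
    {z : Fin m → ℝ} (hz : 0 ≤ z) (h : dot (p k) z < dot (p k) (x k)) : u z < u (x k) := by
  -- raise every coordinate of `z` by `ε`, small enough to stay strictly cheaper than `x k`
  set D := dot (p k) 1
  have hD : 0 ≤ D := dot_nonneg (hp k) zero_le_one
  set ε := (dot (p k) (x k) - dot (p k) z) / (D + 1) with hε
  have hε0 : 0 < ε := div_pos (by linarith) (by linarith)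
  have hεD : ε * D < dot (p k) (x k) - dot (p k) z := by
    rw [hε, div_mul_eq_mul_div, div_lt_iff₀ (by linarith)]; nlinarith
  have hz' : 0 ≤ z + ε • 1 := add_nonneg hz (smul_nonneg hε0.le zero_le_one)
  have hcheap : dot (p k) (z + ε • 1) ≤ dot (p k) (x k) := by
    rw [dot_add, dot_smul]; linarith
  exact lt_of_lt_of_le (hu.1.2 z _ hz fun j => by simp [hε0]) (hu.le_of_dot_le k hz' hcheap)

variable {xb : Fin m → ℝ}

theorem RPa.nonneg {a b : Fin m → ℝ} (h : RPa p x xb a b) : 0 ≤ a ∧ 0 ≤ b := by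
  rcases h with ⟨ha, hb, _⟩ | ⟨ha, hb, _⟩ | ⟨ha, hb, _⟩ <;> exact ⟨ha, hb⟩

theorem Rationalizes.le_of_rpa (hu : Rationalizes p x u) (hx : ∀ k, 0 ≤ x k)
    (hxb : ∀ k, u (x k) ≤ u xb) {a b : Fin m → ℝ} (h : RPa p x xb a b) : u b ≤ u a := by
  rcases h with ⟨-, hb, rfl | ⟨k, hka, hkb⟩⟩ | ⟨-, -, rfl, k, rfl⟩ |
    ⟨-, hb, rfl, k, rfl, hk⟩
  · exact le_rfl
  · exact (hu.le_of_dot_le k hb hkb).trans (hu.1.1 _ _ (hx k) hka)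
  · exact hxb k
  · exact hu.le_of_dot_le k hb (by rw [dot_sub] at hk; linarith)

theorem Rationalizes.le_of_reflTransGen_rpa (hu : Rationalizes p x u) (hx : ∀ k, 0 ≤ x k)
    (hxb : ∀ k, u (x k) ≤ u xb) {a b : Fin m → ℝ}
    (h : Relation.ReflTransGen (RPa p x xb) a b) : u b ≤ u a := by
  induction h with
  | refl => exact le_rfl
  | tail _ hbc ih => exact (hu.le_of_rpa hx hxb hbc).trans ih

theorem Rationalizes.le_of_irpa (hu : Rationalizes p x u) (hx : ∀ k, 0 ≤ x k)
    (hxb : ∀ k, u (x k) ≤ u xb) {a b : Fin m → ℝ} (h : IRPa p x xb a b) : u b ≤ u a :=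
  hu.le_of_reflTransGen_rpa hx hxb h.to_reflTransGen

theorem Rationalizes.lt_of_srpa (hu : Rationalizes p x u) (hx : ∀ k, 0 ≤ x k)
    (hxb : ∀ k, u (x k) ≤ u xb) (hp : ∀ k, 0 ≤ p k) {a b : Fin m → ℝ}
    (h : SRPa p x xb a b) : u b < u a := by
  rcases h with ⟨ha, hb, ⟨a', ha', hR⟩ | ⟨k, hka, hkb⟩⟩ | ⟨-, hb, rfl, k, rfl, hk⟩
  · exact (hu.le_of_rpa hx hxb hR).trans_lt (hu.1.2 a' a hR.nonneg.1 ha')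
  · exact (hu.lt_of_dot_lt hp k hb hkb).trans_le (hu.1.1 _ _ (hx k) hka)
  · exact hu.lt_of_dot_lt hp k hb (by rw [dot_sub] at hk; linarith)

theorem Rationalizes.lt_of_sirpa (hu : Rationalizes p x u) (hx : ∀ k, 0 ≤ x k)
    (hxb : ∀ k, u (x k) ≤ u xb) (hp : ∀ k, 0 ≤ p k) {a b : Fin m → ℝ}
    (h : SIRPa p x xb a b) : u b < u a := by
  obtain ⟨c, d, hac, hcd, hdb⟩ := h
  calc u b ≤ u d := hu.le_of_reflTransGen_rpa hx hxb hdb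
    _ < u c := hu.lt_of_srpa hx hxb hp hcd
    _ ≤ u a := hu.le_of_reflTransGen_rpa hx hxb hac

theorem Rationalizes.augGARP (hu : Rationalizes p x u) (hx : ∀ k, 0 ≤ x k)
    (hxb : ∀ k, u (x k) ≤ u xb) (hp : ∀ k, 0 ≤ p k) : AugGARP p x xb :=
  fun ⟨_, _, hab, hba⟩ => (hu.le_of_irpa hx hxb hab).not_gt (hu.lt_of_sirpa hx hxb hp hba)

theorem ExplQuasiconcaveOn'.not_strictDomRel (hq : ExplQuasiconcaveOn' u)
    (hu : Rationalizes p x u) (hx : ∀ k, 0 ≤ x k) (hxb : ∀ k, u (x k) ≤ u xb)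
    (hp : ∀ k, 0 ≤ p k) :
    ¬∃ y, y ≤ xb ∧ StrictDomRel (IRPa p x xb) (SIRPa p x xb) y xb := by
  rintro ⟨y, hy, L, lam, z, hlam, hsum, hz, rfl, hweak, l₀, hl₀, hstrict⟩
  have hlt := hq.lt_apply_sum hlam hsum hz (fun l => hu.le_of_irpa hx hxb (hweak l)) hl₀
    (hu.lt_of_sirpa hx hxb hp hstrict)
  exact hlt.not_ge (hu.1.1 _ _ (Finset.sum_nonneg fun l _ => smul_nonneg (hlam l) (hz l)) hy)

end Rationalizes

section Afriat

variable {ι : Type*}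

theorem exists_forall_reflTransGen_imp (r : ι → ι → Prop) {S : Finset ι} (hS : S.Nonempty) :
    ∃ k ∈ S, ∀ j ∈ S, Relation.ReflTransGen r k j → Relation.ReflTransGen r j k := by
  classical
  let below : ι → Finset ι := fun k => S.filter (Relation.ReflTransGen r k)
  obtain ⟨k, hkS, hk⟩ := S.exists_min_image (fun k => (below k).card) hS
  refine ⟨k, hkS, fun j hjS hkj => ?_⟩
  by_contra hjk
  have hsub : below j ⊂ below k := by
    refine Finset.ssubset_iff_of_subset (fun l hl => ?_) |>.mpr ⟨k, ?_, fun hk' => ?_⟩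
    · simp only [below, Finset.mem_filter] at hl ⊢
      exact ⟨hl.1, hkj.trans hl.2⟩
    · exact Finset.mem_filter.mpr ⟨hkS, .refl⟩
    · exact hjk (Finset.mem_filter.mp hk').2
  exact (hk j hjS).not_gt (Finset.card_lt_card hsub)

variable (A : ι → ι → ℝ)

def CyclicallyConsistent (S : Finset ι) : Prop :=
  ∀ i ∈ S, ∀ j ∈ S, Relation.ReflTransGen (fun a b => A a b ≤ 0) i j → 0 ≤ A j i

def AfriatSolvable (S : Finset ι) : Prop :=
  ∃ U lam : ι → ℝ, (∀ j ∈ S, 0 < lam j) ∧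
    ∀ i ∈ S, ∀ j ∈ S, U i ≤ U j + lam j * A j i

variable {A}

theorem CyclicallyConsistent.mono {S T : Finset ι} (h : CyclicallyConsistent A T) (hST : S ⊆ T) :
    CyclicallyConsistent A S :=
  fun i hi j hj => h i (hST hi) j (hST hj)

theorem AfriatSolvable.union [DecidableEq ι] {B C : Finset ι} (hBC : Disjoint B C)
    (hC : AfriatSolvable A C) (hpos : ∀ k ∈ B, ∀ j ∈ C, 0 < A k j)
    (hnonneg : ∀ k ∈ B, ∀ k' ∈ B, 0 ≤ A k k') :
    AfriatSolvable A (B ∪ C) := by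
  obtain ⟨U, lam, hlam, hU⟩ := hC
  -- `B` gets the level `-c`, below every bound that `C` imposes on it, and the slope
  -- `max M 1`, steep enough to lift `-c` above every level on `C` across the positive `A j i`
  obtain ⟨c, hc⟩ := ((C ×ˢ B).image fun q => -(U q.1 + lam q.1 * A q.1 q.2)).exists_le
  obtain ⟨M, hM⟩ := ((C ×ˢ B).image fun q => (U q.1 + c) / A q.2 q.1).exists_le
  have hlow : ∀ j ∈ C, ∀ i ∈ B, -c ≤ U j + lam j * A j i := fun j hj i hi => by
    have := hc _ (Finset.mem_image.mpr ⟨(j, i), Finset.mem_product.mpr ⟨hj, hi⟩, rfl⟩)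
    linarith
  have hslope : ∀ i ∈ C, ∀ j ∈ B, U i ≤ -c + max M 1 * A j i := fun i hi j hj => by
    have h := hM _ (Finset.mem_image.mpr ⟨(i, j), Finset.mem_product.mpr ⟨hi, hj⟩, rfl⟩)
    rw [div_le_iff₀ (hpos j hj i hi)] at h
    nlinarith [le_max_left M 1, hpos j hj i hi]
  refine ⟨fun i => if i ∈ B then -c else U i, fun i => if i ∈ B then max M 1 else lam i,
    fun j hj => ?_, fun i hi j hj => ?_⟩
  · by_cases hjB : j ∈ B
    · simp only [hjB, if_true]; exact lt_of_lt_of_le one_pos (le_max_right M 1)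
    · simpa [hjB] using hlam j ((Finset.mem_union.mp hj).resolve_left hjB)
  · have hCB : ∀ {l}, l ∈ C → l ∉ B := fun hl hlB => Finset.disjoint_left.mp hBC hlB hl
    rcases Finset.mem_union.mp hi with hiB | hiC <;> rcases Finset.mem_union.mp hj with hjB | hjC
    · simp only [hiB, hjB, if_true]
      nlinarith [le_max_right M 1, hnonneg j hjB i hiB]
    · simpa [hiB, hCB hjC] using hlow j hjC i hiB
    · simpa [hjB, hCB hiC] using hslope i hiC j hjB
    · simpa [hCB hiC, hCB hjC] using hU i hiC j hjC

theorem CyclicallyConsistent.afriatSolvable {S : Finset ι} (h : CyclicallyConsistent A S) :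
    AfriatSolvable A S := by
  classical
  induction S using Finset.strongInduction with
  | H S ih =>
  rcases S.eq_empty_or_nonempty with rfl | hS
  · exact ⟨0, 1, by simp, by simp⟩
  obtain ⟨k, hkS, hk⟩ := exists_forall_reflTransGen_imp (fun a b => A a b ≤ 0) hS
  -- by the choice of `k`, `B` is a bottom class: no chain leaves it
  let B := S.filter (Relation.ReflTransGen (fun a b => A a b ≤ 0) k)
  have hBS : B ⊆ S := Finset.filter_subset _ _
  have hBne : B.Nonempty := ⟨k, Finset.mem_filter.mpr ⟨hkS, .refl⟩⟩
  have hsol := (ih (S \ B) (Finset.sdiff_ssubset hBS hBne)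
    (h.mono Finset.sdiff_subset)).union Finset.disjoint_sdiff ?_ ?_
  · rwa [Finset.union_sdiff_of_subset hBS] at hsol
  · intro i hi j hj
    obtain ⟨hjS, hjB⟩ := Finset.mem_sdiff.mp hj
    by_contra hij
    exact hjB (Finset.mem_filter.mpr ⟨hjS, (Finset.mem_filter.mp hi).2.tail (not_lt.mp hij)⟩)
  · intro i hi j hj
    obtain ⟨hiS, hki⟩ := Finset.mem_filter.mp hi
    obtain ⟨hjS, hkj⟩ := Finset.mem_filter.mp hj
    exact h j hjS i hiS ((hk j hjS hkj).trans hki)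

end Afriat

section AfriatUtility

variable {ι : Type*} {m : ℕ}

def afriatMatrix (P X : ι → Fin m → ℝ) (i j : ι) : ℝ := dot (P i) (X j) - dot (P i) (X i)

variable [Fintype ι] [Nonempty ι] (P X : ι → Fin m → ℝ) (U lam : ι → ℝ)

def afriatUtility (z : Fin m → ℝ) : ℝ :=
  Finset.univ.inf' Finset.univ_nonempty fun k => U k + lam k * (dot (P k) z - dot (P k) (X k))

variable {P X U lam}

theorem afriatUtility_le (k : ι) (z : Fin m → ℝ) :
    afriatUtility P X U lam z ≤ U k + lam k * (dot (P k) z - dot (P k) (X k)) :=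
  Finset.inf'_le _ (Finset.mem_univ k)

theorem afriatUtility_apply_self (hU : ∀ i j, U i ≤ U j + lam j * afriatMatrix P X j i)
    (k : ι) : afriatUtility P X U lam (X k) = U k :=
  le_antisymm ((afriatUtility_le k (X k)).trans_eq (by ring))
    (Finset.le_inf' _ _ fun j _ => hU k j)

theorem concaveOn_afriatUtility : ConcaveOn ℝ Set.univ (afriatUtility P X U lam) := by
  refine ⟨convex_univ, fun a _ b _ s t hs ht hst => Finset.le_inf' _ _ fun k _ => ?_⟩
  have ha := mul_le_mul_of_nonneg_left (afriatUtility_le k a : afriatUtility P X U lam a ≤ _) hs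
  have hb := mul_le_mul_of_nonneg_left (afriatUtility_le k b : afriatUtility P X U lam b ≤ _) ht
  simp only [smul_eq_mul, dot_add, dot_smul]
  linear_combination ha + hb + (U k - lam k * dot (P k) (X k)) * hst

theorem incr_afriatUtility (hP : ∀ k, 0 ≤ P k) (hP0 : ∀ k, P k ≠ 0)
    (hlam : ∀ k, 0 < lam k) : Incr (afriatUtility P X U lam) := by
  refine ⟨fun a b _ hab => Finset.le_inf' _ _ fun k _ => (afriatUtility_le k a).trans ?_,
    fun a b _ hab => ?_⟩
  · have := dot_le_dot (hP k) hab
    gcongr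
    exact (hlam k).le
  · obtain ⟨k, -, hk⟩ := Finset.exists_mem_eq_inf' Finset.univ_nonempty
      fun k => U k + lam k * (dot (P k) b - dot (P k) (X k))
    refine (afriatUtility_le k a).trans_lt ?_
    rw [afriatUtility, hk]
    have := dot_lt_dot (hP k) (hP0 k) hab
    gcongr
    exact hlam k

theorem dot_lt_of_afriatUtility_lt (hlam : ∀ k, 0 < lam k)
    (hU : ∀ i j, U i ≤ U j + lam j * afriatMatrix P X j i) (k : ι) {z : Fin m → ℝ}
    (h : afriatUtility P X U lam (X k) < afriatUtility P X U lam z) :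
    dot (P k) (X k) < dot (P k) z := by
  rw [afriatUtility_apply_self hU] at h
  have := (h.trans_le (afriatUtility_le k z))
  by_contra! hle
  nlinarith [hlam k]

end AfriatUtility

section Augmented

variable {m K : ℕ} (p x : Fin K → Fin m → ℝ) (xb : Fin m → ℝ)

def augPrice : Option (Fin K) → Fin m → ℝ := fun o => o.elim 0 p

def augBundle : Option (Fin K) → Fin m → ℝ := fun o => o.elim xb x

variable {p x xb}

theorem rpa_of_afriatMatrix_nonpos (hx : ∀ k, 0 ≤ x k) (hxb : 0 ≤ xb) {o o' : Option (Fin K)}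
    (h : afriatMatrix (augPrice p) (augBundle x xb) o o' ≤ 0) :
    RPa p x xb (augBundle x xb o) (augBundle x xb o') := by
  rcases o with _ | j <;> rcases o' with _ | i
  · exact Or.inl ⟨hxb, hxb, Or.inl rfl⟩
  · exact Or.inr (Or.inl ⟨hxb, hx i, rfl, i, rfl⟩)
  · exact Or.inr (Or.inr ⟨hx j, hxb, rfl, j, rfl, by rw [dot_sub]; exact h⟩)
  · exact Or.inl ⟨hx j, hx i, Or.inr ⟨j, le_rfl, sub_nonpos.mp h⟩⟩

theorem srpa_of_afriatMatrix_neg (hx : ∀ k, 0 ≤ x k) (hxb : 0 ≤ xb) {o o' : Option (Fin K)}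
    (h : afriatMatrix (augPrice p) (augBundle x xb) o o' < 0) :
    SRPa p x xb (augBundle x xb o) (augBundle x xb o') := by
  rcases o with _ | j
  · simp [afriatMatrix, augPrice, dot] at h
  rcases o' with _ | i
  · exact Or.inr ⟨hx j, hxb, rfl, j, rfl, by rw [dot_sub]; exact h⟩
  · exact Or.inl ⟨hx j, hx i, Or.inr ⟨j, le_rfl, sub_neg.mp h⟩⟩

theorem AugGARP.cyclicallyConsistent (hgarp : AugGARP p x xb) (hx : ∀ k, 0 ≤ x k)
    (hxb : 0 ≤ xb) :
    CyclicallyConsistent (afriatMatrix (augPrice p) (augBundle x xb)) Finset.univ := by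
  intro i _ j _ hij
  by_contra! hji
  have hchain := hij.lift (augBundle x xb) fun _ _ => rpa_of_afriatMatrix_nonpos hx hxb
  refine hgarp ⟨augBundle x xb i, augBundle x xb j, ?_,
    _, _, .refl, srpa_of_afriatMatrix_neg hx hxb hji, .refl⟩
  rcases Relation.reflTransGen_iff_eq_or_transGen.mp hchain with heq | htrans
  · rw [heq]
    exact .single (rpa_of_afriatMatrix_nonpos hx hxb (by simp [afriatMatrix]))
  · exact htrans

theorem AugGARP.price_ne_zero (hgarp : AugGARP p x xb) (hx : ∀ k, 0 ≤ x k) (k : Fin K) :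
    p k ≠ 0 := by
  intro hpk
  have hx1 : 0 ≤ x k + 1 := add_nonneg (hx k) zero_le_one
  -- with zero prices, `x k` is revealed preferred to the strictly larger `x k + 1`
  have hstrict : SRPa p x xb (x k + 1) (x k) :=
    Or.inl ⟨hx1, hx k, Or.inl ⟨x k, fun j => by simp, Or.inl ⟨hx k, hx k, Or.inl rfl⟩⟩⟩
  refine hgarp ⟨x k, x k + 1, .single (Or.inl ⟨hx k, hx1, Or.inr ⟨k, le_rfl, ?_⟩⟩),
    _, _, .refl, hstrict, .refl⟩
  simp [hpk, dot]

theorem AugGARP.exists_utility (hgarp : AugGARP p x xb) (hm : 0 < m) (hp : ∀ k, 0 ≤ p k)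
    (hx : ∀ k, 0 ≤ x k) (hxb : 0 ≤ xb) :
    ∃ u : (Fin m → ℝ) → ℝ, ExplQuasiconcaveOn' u ∧ Rationalizes p x u ∧
      ∀ k, u (x k) ≤ u xb := by
  rcases isEmpty_or_nonempty (Fin K) with hK | hK
  · have h1 : (1 : Fin m → ℝ) ≠ 0 := fun h => one_ne_zero (congrFun h ⟨0, hm⟩)
    refine ⟨dot 1, ConcaveOn.explQuasiconcaveOn' ⟨convex_Ici 0, fun a _ b _ s t _ _ _ => ?_⟩,
      ⟨incr_dot zero_le_one h1, isEmptyElim⟩, isEmptyElim⟩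
    simp only [dot_add, dot_smul, smul_eq_mul, le_refl]
  obtain ⟨U, lam, hlam, hU⟩ := (hgarp.cyclicallyConsistent hx hxb).afriatSolvable
  have hU' : ∀ i j : Fin K, U (some i) ≤ U (some j) + lam (some j) * afriatMatrix p x j i :=
    fun i j => hU _ (Finset.mem_univ _) _ (Finset.mem_univ _)
  have hlam' : ∀ k : Fin K, 0 < lam (some k) := fun k => hlam _ (Finset.mem_univ _)
  refine ⟨afriatUtility p x (U ∘ some) (lam ∘ some),
    (concaveOn_afriatUtility.subset (Set.subset_univ _) (convex_Ici 0)).explQuasiconcaveOn',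
    ⟨incr_afriatUtility hp (hgarp.price_ne_zero hx) hlam',
      fun k z _ => dot_lt_of_afriatUtility_lt hlam' hU' k⟩, fun k => ?_⟩
  -- `xb` enters the Afriat inequalities as an observation at zero prices with level `U none`
  have hk : U (some k) ≤ U none := by
    simpa [afriatMatrix, augPrice, dot] using hU _ (Finset.mem_univ _) none (Finset.mem_univ _)
  exact (afriatUtility_apply_self hU' k).trans_le <|
    hk.trans (Finset.le_inf' _ _ fun j _ => hU none (Finset.mem_univ _) _ (Finset.mem_univ _))

end Augmented

/-- There is an increasing, explicitly quasiconcave rationalizing utility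
ranking the hypothetical bundle `xb` weakly above every observed bundle if and only if the
augmented relations satisfy GARP, and no bundle `y ≤ xb` strictly dominates `xb`. -/
theorem stmt3 {m K : ℕ} (hm : 0 < m)
    (p x : Fin K → Fin m → ℝ) (hp : ∀ k, 0 ≤ p k) (hx : ∀ k, 0 ≤ x k)
    (xb : Fin m → ℝ) (hxb : 0 ≤ xb) :
    (∃ u : (Fin m → ℝ) → ℝ, ExplQuasiconcaveOn' u ∧ Rationalizes p x u ∧
        ∀ k, u (x k) ≤ u xb)
    ↔ ((¬ ∃ a b : Fin m → ℝ, IRPa p x xb a b ∧ SIRPa p x xb b a) ∧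
        ¬ ∃ y : Fin m → ℝ, y ≤ xb ∧ StrictDomRel (IRPa p x xb) (SIRPa p x xb) y xb) := by
  constructor
  · rintro ⟨u, hq, hu, hxb_top⟩
    exact ⟨hu.augGARP hx hxb_top hp, hq.not_strictDomRel hu hx hxb_top hp⟩
  · rintro ⟨hgarp, -⟩
    exact AugGARP.exists_utility hgarp hm hp hx hxb
end

section
/- Let {(p_i^k, x_i^k)}_{k=1}^{K_i}, i ∈ N, be a group dataset and x̄ an allocation. If there exist increasing, explicitly quasiconcave utilities (u_i)_{i∈N}, each u_i rationalizing agent i's dataset, for which x̄ is Pareto efficient, then x̄ is not empirically dominated by any allocation. -/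
open Finset

/-- Given a profile of utilities, `yb` Pareto dominates `xb`. -/
def ParetoDom {m : ℕ} {ι : Type} [Fintype ι] (u : ι → (Fin m → ℝ) → ℝ)
    (yb xb : ι → Fin m → ℝ) : Prop :=
  (∀ i, u i (xb i) ≤ u i (yb i)) ∧ ∃ i, u i (xb i) < u i (yb i)

/-- `xb` is Pareto efficient: no allocation of the same aggregate bundle Pareto dominates it. -/
def ParetoEff {m : ℕ} {ι : Type} [Fintype ι] (u : ι → (Fin m → ℝ) → ℝ)
    (xb : ι → Fin m → ℝ) : Prop :=
  ¬ ∃ yb : ι → Fin m → ℝ, (∀ i, 0 ≤ yb i) ∧ (∑ i, yb i) = (∑ i, xb i) ∧ ParetoDom u yb xb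

/-- The allocation `yb` empirically dominates `xb`. -/
def EmpDom {m : ℕ} {ι : Type} [Fintype ι] (K : ι → ℕ)
    (p x : ∀ i, Fin (K i) → Fin m → ℝ) (yb xb : ι → Fin m → ℝ) : Prop :=
  (∀ i, 0 ≤ yb i) ∧ (∑ i, yb i) ≤ (∑ i, xb i) ∧
  (∀ i, WeakDomRel (IRP (p i) (x i)) (yb i) (xb i)) ∧
  (∃ i, StrictDomRel (IRP (p i) (x i)) (SIRP (p i) (x i)) (yb i) (xb i))

section Aux

variable {m K : ℕ} {p x : Fin K → Fin m → ℝ} {u : (Fin m → ℝ) → ℝ}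

lemma dot_nonneg' {a b : Fin m → ℝ} (ha : 0 ≤ a) (hb : 0 ≤ b) : 0 ≤ dot a b :=
  Finset.sum_nonneg fun j _ => mul_nonneg (ha j) (hb j)

lemma rp_le (hx' : ∀ k, 0 ≤ x k) (hr : Rationalizes p x u) {a b : Fin m → ℝ}
    (hab : RP p x a b) : u b ≤ u a := by
  obtain ⟨ha, hb, hc⟩ := hab
  rcases hc with rfl | ⟨k, hxk, hdk⟩
  · exact le_refl _
  · have h1 : u b ≤ u (x k) := by
      by_contra hlt
      push_neg at hlt
      exact absurd (hr.2 k b hb hlt) (not_lt.2 hdk)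
    exact h1.trans (hr.1.1 (x k) a (hx' k) hxk)

lemma irp_le (hx' : ∀ k, 0 ≤ x k) (hr : Rationalizes p x u) {a b : Fin m → ℝ}
    (hab : IRP p x a b) : u b ≤ u a := by
  induction hab with
  | single h => exact rp_le hx' hr h
  | tail _ h ih => exact (rp_le hx' hr h).trans ih

lemma rtg_le (hx' : ∀ k, 0 ≤ x k) (hr : Rationalizes p x u) {a b : Fin m → ℝ}
    (hab : Relation.ReflTransGen (RP p x) a b) : u b ≤ u a := by
  induction hab with
  | refl => exact le_refl _
  | tail _ h ih => exact (rp_le hx' hr h).trans ih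

lemma srp_lt (hp' : ∀ k, 0 ≤ p k) (hx' : ∀ k, 0 ≤ x k)
    (hr : Rationalizes p x u) {a b : Fin m → ℝ} (hab : SRP p x a b) : u b < u a := by
  obtain ⟨ha, hb, hc⟩ := hab
  rcases hc with ⟨a', hlt, hrp⟩ | ⟨k, hxk, hdk⟩
  · exact lt_of_le_of_lt (rp_le hx' hr hrp) (hr.1.2 a' a hrp.1 hlt)
  · -- dot (p k) b < dot (p k) (x k)
    have hSpos : 0 < ∑ j, p k j := by
      by_contra hS
      push_neg at hS
      have hS0 : ∀ j ∈ Finset.univ, p k j = 0 :=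
        (Finset.sum_eq_zero_iff_of_nonneg (fun j _ => hp' k j)).1
          (le_antisymm hS (Finset.sum_nonneg fun j _ => hp' k j))
      have : dot (p k) (x k) = 0 := Finset.sum_eq_zero fun j hj => by
        rw [hS0 j hj, zero_mul]
      have hb0 : dot (p k) b = 0 := Finset.sum_eq_zero fun j hj => by
        rw [hS0 j hj, zero_mul]
      rw [this, hb0] at hdk
      exact lt_irrefl _ hdk
    set ε : ℝ := (dot (p k) (x k) - dot (p k) b) / (∑ j, p k j) with hε
    have hεpos : 0 < ε := div_pos (sub_pos.2 hdk) hSpos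
    set b' : Fin m → ℝ := fun j => b j + ε with hb'
    have hb'0 : 0 ≤ b' := fun j => add_nonneg (hb j) hεpos.le
    have hblt : u b < u b' := hr.1.2 b b' hb fun j => lt_add_of_pos_right _ hεpos
    have hdot : dot (p k) b' = dot (p k) (x k) := by
      have : dot (p k) b' = dot (p k) b + ε * ∑ j, p k j := by
        simp only [dot, hb', mul_add]
        rw [Finset.sum_add_distrib, Finset.mul_sum]
        congr 1
        exact Finset.sum_congr rfl fun j _ => mul_comm _ _
      rw [this, hε, div_mul_cancel₀ _ (ne_of_gt hSpos)]
      ring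
    have h1 : u b' ≤ u (x k) := by
      by_contra hlt
      push_neg at hlt
      exact absurd (hr.2 k b' hb'0 hlt) (by rw [hdot]; exact lt_irrefl _)
    exact lt_of_lt_of_le hblt (h1.trans (hr.1.1 (x k) a (hx' k) hxk))

lemma sirp_lt (hp' : ∀ k, 0 ≤ p k) (hx' : ∀ k, 0 ≤ x k)
    (hr : Rationalizes p x u) {a b : Fin m → ℝ} (hab : SIRP p x a b) : u b < u a := by
  obtain ⟨c, d, h1, h2, h3⟩ := hab
  exact lt_of_le_of_lt (rtg_le hx' hr h3) (lt_of_lt_of_le (srp_lt hp' hx' hr h2) (rtg_le hx' hr h1))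

lemma sconvex (hqc : QuasiconcaveOn' u) (c : ℝ) :
    Convex ℝ {w : Fin m → ℝ | 0 ≤ w ∧ c ≤ u w} := by
  intro v hv w hw a b ha hb hab
  constructor
  · intro j
    simp only [Pi.add_apply, Pi.smul_apply, smul_eq_mul]
    exact add_nonneg (mul_nonneg ha (hv.1 j)) (mul_nonneg hb (hw.1 j))
  · rcases eq_or_lt_of_le ha with rfl | hapos
    · have hb1 : b = 1 := by linarith
      simp [hb1, hw.2]
    · rcases eq_or_lt_of_le hb with rfl | hbpos
      · have ha1 : a = 1 := by linarith
        simp [ha1, hv.2]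
      · have ha1 : a < 1 := by linarith
        have hbe : b = 1 - a := by linarith
        rw [hbe]
        exact le_trans (le_min hv.2 hw.2) (hqc v w hv.1 hw.1 a hapos ha1)

lemma combo_mem {L : ℕ} (hqc : QuasiconcaveOn' u) (lam : Fin L → ℝ) (z : Fin L → Fin m → ℝ)
    (hlam : ∀ l, 0 ≤ lam l) (hsum : (∑ l, lam l) = 1) (hz : ∀ l, 0 ≤ z l)
    (c : ℝ) (hc : ∀ l, c ≤ u (z l)) :
    (∑ l, lam l • z l) ∈ {w : Fin m → ℝ | 0 ≤ w ∧ c ≤ u w} :=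
  (sconvex hqc c).sum_mem (fun l _ => hlam l) hsum (fun l _ => ⟨hz l, hc l⟩)

lemma combo_lt {L : ℕ} (hqc : ExplQuasiconcaveOn' u) (lam : Fin L → ℝ) (z : Fin L → Fin m → ℝ)
    (hlam : ∀ l, 0 ≤ lam l) (hsum : (∑ l, lam l) = 1) (hz : ∀ l, 0 ≤ z l)
    (c : ℝ) (hc : ∀ l, c ≤ u (z l)) (l0 : Fin L) (hl0 : 0 < lam l0) (hlt : c < u (z l0)) :
    c < u (∑ l, lam l • z l) := by
  set t := lam l0 with ht
  have htle : t ≤ 1 := by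
    rw [← hsum]
    exact Finset.single_le_sum (fun l _ => hlam l) (Finset.mem_univ l0)
  rcases eq_or_lt_of_le htle with ht1 | ht1
  · -- all other weights vanish
    have herase : ∑ l ∈ Finset.univ.erase l0, lam l = 0 := by
      have := Finset.add_sum_erase Finset.univ lam (Finset.mem_univ l0)
      rw [hsum] at this
      linarith [this, ht1, ht]
    have hzero : ∀ l ∈ Finset.univ.erase l0, lam l = 0 :=
      (Finset.sum_eq_zero_iff_of_nonneg (fun l _ => hlam l)).1 herase
    have : (∑ l, lam l • z l) = z l0 := by
      rw [Finset.sum_eq_single_of_mem l0 (Finset.mem_univ l0)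
        (fun b _ hb => by rw [hzero b (Finset.mem_erase.2 ⟨hb, Finset.mem_univ b⟩), zero_smul]),
        ← ht, ht1, one_smul]
    rw [this]; exact hlt
  · have hs : (0:ℝ) < 1 - t := by linarith
    set w : Fin m → ℝ := ∑ l ∈ Finset.univ.erase l0, (lam l / (1 - t)) • z l with hw
    have hwmem : w ∈ {w : Fin m → ℝ | 0 ≤ w ∧ c ≤ u w} := by
      apply (sconvex hqc.1 c).sum_mem
      · exact fun l _ => div_nonneg (hlam l) hs.le
      · rw [← Finset.sum_div]
        have := Finset.add_sum_erase Finset.univ lam (Finset.mem_univ l0)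
        rw [hsum] at this
        have heq : ∑ l ∈ Finset.univ.erase l0, lam l = 1 - t := by linarith [ht]
        rw [heq, div_self (ne_of_gt hs)]
      · exact fun l _ => ⟨hz l, hc l⟩
    have hyeq : (∑ l, lam l • z l) = t • z l0 + (1 - t) • w := by
      rw [hw, Finset.smul_sum]
      have : ∀ l ∈ Finset.univ.erase l0,
          (1 - t) • ((lam l / (1 - t)) • z l) = lam l • z l := fun l _ => by
        rw [smul_smul, mul_div_cancel₀ _ (ne_of_gt hs)]
      rw [Finset.sum_congr rfl this, ht]
      exact (Finset.add_sum_erase Finset.univ (fun l => lam l • z l) (Finset.mem_univ l0)).symm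
    rw [hyeq]
    rcases eq_or_ne (u (z l0)) (u w) with heq | hne
    · have : c < u w := heq ▸ hlt
      exact lt_of_lt_of_le (lt_min hlt this)
        (hqc.1 (z l0) w (hz l0) hwmem.1 t hl0 ht1)
    · exact lt_of_le_of_lt (le_min hlt.le hwmem.2)
        (hqc.2 (z l0) w (hz l0) hwmem.1 hne t hl0 ht1)

end Aux

/-- If an allocation `xb` is Pareto efficient for some profile of increasing,
explicitly quasiconcave utilities rationalizing the group dataset, then `xb` is not
empirically dominated by any allocation. -/
theorem stmt5 {m : ℕ} (hm : 0 < m) {ι : Type} [Fintype ι]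
    (K : ι → ℕ) (p x : ∀ i, Fin (K i) → Fin m → ℝ)
    (hp : ∀ i k, 0 ≤ p i k) (hx : ∀ i k, 0 ≤ x i k)
    (xb : ι → Fin m → ℝ) (hxb : ∀ i, 0 ≤ xb i)
    (h : ∃ u : ι → (Fin m → ℝ) → ℝ,
      (∀ i, ExplQuasiconcaveOn' (u i) ∧ Rationalizes (p i) (x i) (u i)) ∧ ParetoEff u xb) :
    ¬ ∃ yb : ι → Fin m → ℝ, EmpDom K p x yb xb := by
  classical
  rintro ⟨yb, hyb0, hagg, hweak, i0, hstrict⟩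
  obtain ⟨u, hu, hpe⟩ := h
  have hle : ∀ i, u i (xb i) ≤ u i (yb i) := by
    intro i
    obtain ⟨L, lam, z, hlam, hsum, hz, hy, hrel⟩ := hweak i
    have hc : ∀ l, u i (xb i) ≤ u i (z l) := fun l => irp_le (hx i) ((hu i).2) (hrel l)
    have := combo_mem (hu i).1.1 lam z hlam hsum hz (u i (xb i)) hc
    rw [hy]; exact this.2
  have hlt : u i0 (xb i0) < u i0 (yb i0) := by
    obtain ⟨L, lam, z, hlam, hsum, hz, hy, hrel, l0, hl0, hs⟩ := hstrict
    have hc : ∀ l, u i0 (xb i0) ≤ u i0 (z l) := fun l => irp_le (hx i0) ((hu i0).2) (hrel l)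
    have hclt : u i0 (xb i0) < u i0 (z l0) := sirp_lt (hp i0) (hx i0) ((hu i0).2) hs
    rw [hy]
    exact combo_lt (hu i0).1 lam z hlam hsum hz _ hc l0 hl0 hclt
  set slack : Fin m → ℝ := (∑ i, xb i) - (∑ i, yb i) with hslack
  have hslack0 : 0 ≤ slack := by rw [hslack]; exact sub_nonneg.2 hagg
  set yb' : ι → Fin m → ℝ := Function.update yb i0 (yb i0 + slack) with hyb'
  have hupd : yb' i0 = yb i0 + slack := Function.update_self i0 _ yb
  have hupd' : ∀ i, i ≠ i0 → yb' i = yb i := fun i hi => Function.update_of_ne hi _ yb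
  have hylele : yb i0 ≤ yb i0 + slack := le_add_of_nonneg_right hslack0
  have hmono : u i0 (yb i0) ≤ u i0 (yb' i0) := by
    rw [hupd]
    exact (hu i0).2.1.1 (yb i0) (yb i0 + slack) (hyb0 i0) hylele
  apply hpe
  refine ⟨yb', ?_, ?_, ?_, ⟨i0, ?_⟩⟩
  · intro i
    rcases eq_or_ne i i0 with rfl | hi
    · rw [hupd]; exact fun j => add_nonneg (hyb0 i j) (hslack0 j)
    · rw [hupd' i hi]; exact hyb0 i
  · rw [hyb', Finset.sum_update_of_mem (Finset.mem_univ i0)]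
    have h2 : yb i0 + ∑ i ∈ Finset.univ.erase i0, yb i = ∑ i, yb i :=
      Finset.add_sum_erase Finset.univ yb (Finset.mem_univ i0)
    have h3 : ∑ i ∈ Finset.univ.erase i0, yb i = (∑ i, yb i) - yb i0 := by
      rw [eq_sub_iff_add_eq, add_comm]; exact h2
    rw [Finset.sdiff_singleton_eq_erase, h3, hslack]; abel
  · intro i
    rcases eq_or_ne i i0 with rfl | hi
    · exact (hle i).trans hmono
    · rw [hupd' i hi]; exact hle i
  · exact hlt.trans_le hmono
end

section
/- Let N be a finite set of agents, let each u_i : ℝ^m_+ → ℝ be continuous and increasing, let x̄ = (x̄_i)_{i∈N} be an allocation, and let q ∈ ℝ^m_+ with q ≠ 0 be such that for every i and every y ∈ ℝ^m_+, u_i(y) > u_i(x̄_i) implies q·y > q·x̄_i. Then also u_i(y) ≥ u_i(x̄_i) implies q·y ≥ q·x̄_i for every i, and x̄ is Pareto efficient for (u_i)_{i∈N}. -/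
open Finset

/-- If each `u i` is continuous and increasing on `ℝ^m_+`, and a nonzero
price `q ∈ ℝ^m_+` supports each upper contour set at `xb i` (strictly better bundles are
strictly more expensive), then weakly better bundles are weakly more expensive, and `xb`
is Pareto efficient for `(u i)`. -/
theorem stmt7 {m : ℕ} (hm : 0 < m) {ι : Type} [Fintype ι]
    (u : ι → (Fin m → ℝ) → ℝ)
    (hcont : ∀ i, ContinuousOn (u i) {z : Fin m → ℝ | 0 ≤ z})
    (hinc : ∀ i, Incr (u i))
    (xb : ι → Fin m → ℝ) (hxb : ∀ i, 0 ≤ xb i)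
    (q : Fin m → ℝ) (hq : 0 ≤ q) (hq0 : q ≠ 0)
    (hsupp : ∀ i, ∀ y : Fin m → ℝ, 0 ≤ y → u i (xb i) < u i y →
      dot q (xb i) < dot q y) :
    (∀ i, ∀ y : Fin m → ℝ, 0 ≤ y → u i (xb i) ≤ u i y → dot q (xb i) ≤ dot q y) ∧
    ParetoEff u xb := by
    classical
  -- the total weight of q is positive
  have hS : 0 < ∑ j, q j := by
    obtain ⟨j, hj⟩ : ∃ j, q j ≠ 0 := by
      by_contra h
      push_neg at h
      exact hq0 (funext h)
    have hjpos : 0 < q j := lt_of_le_of_ne (hq j) (Ne.symm hj)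
    exact Finset.sum_pos' (fun k _ => hq k) ⟨j, Finset.mem_univ j, hjpos⟩
  have weak : ∀ i, ∀ y : Fin m → ℝ, 0 ≤ y → u i (xb i) ≤ u i y →
      dot q (xb i) ≤ dot q y := by
    intro i y hy huy
    refine le_of_forall_pos_le_add ?_
    intro δ hδ
    set ε := δ / (∑ j, q j) with hε
    have hεpos : 0 < ε := div_pos hδ hS
    have hstr : StrLt y (fun j => y j + ε) := fun j => by
      simp [lt_add_iff_pos_right, hεpos]
    have hy' : (0 : Fin m → ℝ) ≤ fun j => y j + ε := fun j =>
      add_nonneg (hy j) hεpos.le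
    have hlt : u i (xb i) < u i (fun j => y j + ε) :=
      lt_of_le_of_lt huy ((hinc i).2 y _ hy hstr)
    have h1 := hsupp i _ hy' hlt
    have h2 : dot q (fun j => y j + ε) = dot q y + δ := by
      simp only [dot, mul_add, Finset.sum_add_distrib]
      rw [← Finset.sum_mul, hε, mul_div_cancel₀ _ (ne_of_gt hS)]
    linarith
  refine ⟨weak, ?_⟩
  rintro ⟨yb, hyb, hsum, hdom, i0, hi0⟩
  have hdotsum : ∀ f : ι → Fin m → ℝ, dot q (∑ i, f i) = ∑ i, dot q (f i) := by
    intro f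
    simp only [dot, Finset.sum_apply, Finset.mul_sum]
    exact Finset.sum_comm
  have hlt : ∑ i, dot q (xb i) < ∑ i, dot q (yb i) :=
    Finset.sum_lt_sum (fun i _ => weak i (yb i) (hyb i) (hdom i))
      ⟨i0, Finset.mem_univ i0, hsupp i0 (yb i0) (hyb i0) hi0⟩
  rw [← hdotsum, ← hdotsum, hsum] at hlt
  exact lt_irrefl _ hlt
end

section
/- There exist m = 2, a rationalizable group dataset for two agents N = {1, 2} — agent 1's individual dataset empty, and agent 2's individual dataset consisting of the four observations (p_2^1, x_2^1) = ((2,1),(1,2)), (p_2^2, x_2^2) = ((2,1),(0,4)), (p_2^3, x_2^3) = ((1,2),(2,1)), (p_2^4, x_2^4) = ((1,2),(4,0)) — and two allocations x̄^1 = (x̄^1_1, x̄^1_2) = ((1,0),(0,4)) and x̄^2 = (x̄^2_1, x̄^2_2) = ((0,1),(4,0)) such that: each of x̄^1 and x̄^2 is Pareto efficient for some profile of increasing, concave utilities rationalizing the group dataset, yet there is no single profile (u_1, u_2) of increasing, concave utilities rationalizing the group dataset for which both x̄^1 and x̄^2 are Pareto efficient. -/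
open Finset

/-- Agent 2's observed prices. -/
noncomputable def P2 : Fin 4 → Fin 2 → ℝ := ![![2, 1], ![2, 1], ![1, 2], ![1, 2]]

/-- Agent 2's observed bundles. -/
noncomputable def X2 : Fin 4 → Fin 2 → ℝ := ![![1, 2], ![0, 4], ![2, 1], ![4, 0]]

/-- The allocation `x̄¹ = ((1,0),(0,4))`. -/
noncomputable def A1 : Fin 2 → Fin 2 → ℝ := ![![1, 0], ![0, 4]]

/-- The allocation `x̄² = ((0,1),(4,0))`. -/
noncomputable def A2 : Fin 2 → Fin 2 → ℝ := ![![0, 1], ![4, 0]]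

noncomputable def U2 : (Fin 2 → ℝ) → ℝ := fun z => min (2 * z 0 + z 1) (z 0 + 2 * z 1)

noncomputable def LA : (Fin 2 → ℝ) → ℝ := fun z => 2 * z 0 + z 1

noncomputable def LB : (Fin 2 → ℝ) → ℝ := fun z => z 0 + 2 * z 1

lemma LA_incr : Incr LA := by
  constructor
  · intro x y _ hxy; have := hxy 0; have := hxy 1; simp only [LA]; linarith
  · intro x y _ hxy; have := hxy 0; have := hxy 1; simp only [LA]; linarith

lemma LB_incr : Incr LB := by
  constructor
  · intro x y _ hxy; have := hxy 0; have := hxy 1; simp only [LB]; linarith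
  · intro x y _ hxy; have := hxy 0; have := hxy 1; simp only [LB]; linarith

lemma LA_concave : ConcaveOn ℝ {z : Fin 2 → ℝ | 0 ≤ z} LA := by
  refine ⟨convex_Ici 0, ?_⟩
  intro x _ y _ a b _ _ _
  simp only [LA, Pi.add_apply, Pi.smul_apply, smul_eq_mul]
  exact le_of_eq (by ring)

lemma LB_concave : ConcaveOn ℝ {z : Fin 2 → ℝ | 0 ≤ z} LB := by
  refine ⟨convex_Ici 0, ?_⟩
  intro x _ y _ a b _ _ _
  simp only [LB, Pi.add_apply, Pi.smul_apply, smul_eq_mul]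
  exact le_of_eq (by ring)

lemma U2_le_LA (z : Fin 2 → ℝ) : U2 z ≤ LA z := min_le_left _ _

lemma U2_le_LB (z : Fin 2 → ℝ) : U2 z ≤ LB z := min_le_right _ _

lemma U2_incr : Incr U2 := by
  constructor
  · intro x y _ hxy; have h0 := hxy 0; have h1 := hxy 1
    exact le_min (le_trans (min_le_left _ _) (by linarith))
      (le_trans (min_le_right _ _) (by linarith))
  · intro x y _ hxy; have h0 := hxy 0; have h1 := hxy 1
    exact lt_min (lt_of_le_of_lt (min_le_left _ _) (by linarith))
      (lt_of_le_of_lt (min_le_right _ _) (by linarith))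

lemma U2_concave : ConcaveOn ℝ {z : Fin 2 → ℝ | 0 ≤ z} U2 := by
  refine ⟨convex_Ici 0, ?_⟩
  intro x _ y _ a b ha hb _
  have hx1 : U2 x ≤ 2 * x 0 + x 1 := min_le_left _ _
  have hx2 : U2 x ≤ x 0 + 2 * x 1 := min_le_right _ _
  have hy1 : U2 y ≤ 2 * y 0 + y 1 := min_le_left _ _
  have hy2 : U2 y ≤ y 0 + 2 * y 1 := min_le_right _ _
  have hU : U2 (a • x + b • y) =
      min (2 * (a * x 0 + b * y 0) + (a * x 1 + b * y 1))
        ((a * x 0 + b * y 0) + 2 * (a * x 1 + b * y 1)) := by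
    simp [U2, smul_eq_mul]
  rw [hU, smul_eq_mul, smul_eq_mul]
  refine le_min ?_ ?_ <;>
    nlinarith [mul_le_mul_of_nonneg_left hx1 ha, mul_le_mul_of_nonneg_left hy1 hb,
      mul_le_mul_of_nonneg_left hx2 ha, mul_le_mul_of_nonneg_left hy2 hb]

lemma U2_rat : Rationalizes P2 X2 U2 := by
  refine ⟨U2_incr, ?_⟩
  intro k z hz hlt
  fin_cases k <;>
  · simp only [P2, X2, U2, dot, Fin.sum_univ_two, Matrix.cons_val_zero, Matrix.cons_val_one,
      Matrix.head_cons, Matrix.cons_val', Matrix.cons_val_fin_one, Matrix.empty_val'] at hlt ⊢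
    norm_num at hlt ⊢
    rcases hlt with ⟨h1, h2⟩ <;> linarith

lemma eff1 : ParetoEff ![LA, U2] A1 := by
  rintro ⟨yb, -, hsum, hall, hstr⟩
  have e0 : yb 0 0 + yb 1 0 = 1 := by
    have := congrFun hsum 0
    simpa [Fin.sum_univ_two, A1] using this
  have e1 : yb 0 1 + yb 1 1 = 4 := by
    have := congrFun hsum 1
    simpa [Fin.sum_univ_two, A1] using this
  have h0 : (2:ℝ) ≤ 2 * yb 0 0 + yb 0 1 := by
    have := hall 0
    simpa [A1, LA] using this
  have h1 : (4:ℝ) ≤ U2 (yb 1) := by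
    have := hall 1
    simpa [A1, U2] using this
  have h1' : U2 (yb 1) ≤ 2 * yb 1 0 + yb 1 1 := min_le_left _ _
  obtain ⟨i, hi⟩ := hstr
  fin_cases i
  · have : (2:ℝ) < 2 * yb 0 0 + yb 0 1 := by simpa [A1, LA] using hi
    linarith
  · have : (4:ℝ) < U2 (yb 1) := by simpa [A1, U2] using hi
    linarith

lemma eff2 : ParetoEff ![LB, U2] A2 := by
  rintro ⟨yb, -, hsum, hall, hstr⟩
  have e0 : yb 0 0 + yb 1 0 = 4 := by
    have := congrFun hsum 0
    simpa [Fin.sum_univ_two, A2] using this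
  have e1 : yb 0 1 + yb 1 1 = 1 := by
    have := congrFun hsum 1
    simpa [Fin.sum_univ_two, A2] using this
  have h0 : (2:ℝ) ≤ yb 0 0 + 2 * yb 0 1 := by
    have := hall 0
    simpa [A2, LB] using this
  have h1 : (4:ℝ) ≤ U2 (yb 1) := by
    have := hall 1
    simpa [A2, U2] using this
  have h1' : U2 (yb 1) ≤ yb 1 0 + 2 * yb 1 1 := min_le_right _ _
  obtain ⟨i, hi⟩ := hstr
  fin_cases i
  · have : (2:ℝ) < yb 0 0 + 2 * yb 0 1 := by simpa [A2, LB] using hi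
    linarith
  · have : (4:ℝ) < U2 (yb 1) := by simpa [A2, U2] using hi
    linarith

lemma nn2' (a b : ℝ) (ha : 0 ≤ a) (hb : 0 ≤ b) : (0 : Fin 2 → ℝ) ≤ ![a, b] := by
  intro j; fin_cases j <;> simpa

lemma mem2 (a b : ℝ) (ha : 0 ≤ a) (hb : 0 ≤ b) :
    ![a, b] ∈ {z : Fin 2 → ℝ | 0 ≤ z} := nn2' a b ha hb

lemma impossibility :
    ¬ ∃ u1 u2 : (Fin 2 → ℝ) → ℝ,
      Incr u1 ∧ ConcaveOn ℝ {z : Fin 2 → ℝ | 0 ≤ z} u1 ∧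
      ConcaveOn ℝ {z : Fin 2 → ℝ | 0 ≤ z} u2 ∧ Rationalizes P2 X2 u2 ∧
      ParetoEff ![u1, u2] A1 ∧ ParetoEff ![u1, u2] A2 := by
  rintro ⟨u1, u2, hu1, hc1, hc2, ⟨-, hru2⟩, hE1, hE2⟩
  -- revealed-preference equalities for u2
  have h01 : u2 ![(0:ℝ), 4] ≤ u2 ![(1:ℝ), 2] := by
    by_contra h
    push_neg at h
    have h2 := hru2 0 ![(0:ℝ), 4] (nn2' 0 4 (by norm_num) (by norm_num))
      (by simpa [X2] using h)
    simp [dot, P2, X2, Fin.sum_univ_two] at h2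
    linarith
  have h10 : u2 ![(1:ℝ), 2] ≤ u2 ![(0:ℝ), 4] := by
    by_contra h
    push_neg at h
    have h2 := hru2 1 ![(1:ℝ), 2] (nn2' 1 2 (by norm_num) (by norm_num))
      (by simpa [X2] using h)
    simp [dot, P2, X2, Fin.sum_univ_two] at h2
    linarith
  have h23 : u2 ![(4:ℝ), 0] ≤ u2 ![(2:ℝ), 1] := by
    by_contra h
    push_neg at h
    have h2 := hru2 2 ![(4:ℝ), 0] (nn2' 4 0 (by norm_num) (by norm_num))
      (by simpa [X2] using h)
    simp [dot, P2, X2, Fin.sum_univ_two] at h2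
    linarith
  have h32 : u2 ![(2:ℝ), 1] ≤ u2 ![(4:ℝ), 0] := by
    by_contra h
    push_neg at h
    have h2 := hru2 3 ![(2:ℝ), 1] (nn2' 2 1 (by norm_num) (by norm_num))
      (by simpa [X2] using h)
    have hP : P2 3 = ![(1:ℝ), 2] := by simp [P2]
    have hX : X2 3 = ![(4:ℝ), 0] := by simp [X2]
    rw [hP, hX] at h2
    simp [dot, Fin.sum_univ_two] at h2
    linarith
  -- concavity of u2 along the indifference segment
  have hmix1 : u2 ![(0:ℝ), 4] ≤ u2 ![(1:ℝ)/3, 10/3] := by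
    have hc := hc2.2 (mem2 1 2 (by norm_num) (by norm_num))
      (mem2 0 4 (by norm_num) (by norm_num))
      (by norm_num : (0:ℝ) ≤ 1/3) (by norm_num : (0:ℝ) ≤ 2/3) (by norm_num)
    have heq : (1/3 : ℝ) • ![(1:ℝ), 2] + (2/3 : ℝ) • ![(0:ℝ), 4] = ![(1:ℝ)/3, 10/3] := by
      funext j; fin_cases j <;> simp [smul_eq_mul] <;> norm_num
    rw [heq, smul_eq_mul, smul_eq_mul] at hc
    linarith
  have hmix2 : u2 ![(4:ℝ), 0] ≤ u2 ![(10:ℝ)/3, 1/3] := by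
    have hc := hc2.2 (mem2 2 1 (by norm_num) (by norm_num))
      (mem2 4 0 (by norm_num) (by norm_num))
      (by norm_num : (0:ℝ) ≤ 1/3) (by norm_num : (0:ℝ) ≤ 2/3) (by norm_num)
    have heq : (1/3 : ℝ) • ![(2:ℝ), 1] + (2/3 : ℝ) • ![(4:ℝ), 0] = ![(10:ℝ)/3, 1/3] := by
      funext j; fin_cases j <;> simp [smul_eq_mul] <;> norm_num
    rw [heq, smul_eq_mul, smul_eq_mul] at hc
    linarith
  -- efficiency of A1 forces u1 (2/3,2/3) ≤ u1 (1,0)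
  have key1 : u1 ![(2:ℝ)/3, 2/3] ≤ u1 ![(1:ℝ), 0] := by
    by_contra h
    push_neg at h
    apply hE1
    refine ⟨![![(2:ℝ)/3, 2/3], ![(1:ℝ)/3, 10/3]], ?_, ?_, ?_, ⟨0, ?_⟩⟩
    · intro i; fin_cases i
      · exact nn2' _ _ (by norm_num) (by norm_num)
      · exact nn2' _ _ (by norm_num) (by norm_num)
    · funext j
      fin_cases j <;> simp [Fin.sum_univ_two, A1] <;> norm_num
    · intro i; fin_cases i
      · simpa [A1] using h.le
      · simpa [A1] using hmix1
    · simpa [A1] using h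
  -- efficiency of A2 forces u1 (2/3,2/3) ≤ u1 (0,1)
  have key2 : u1 ![(2:ℝ)/3, 2/3] ≤ u1 ![(0:ℝ), 1] := by
    by_contra h
    push_neg at h
    apply hE2
    refine ⟨![![(2:ℝ)/3, 2/3], ![(10:ℝ)/3, 1/3]], ?_, ?_, ?_, ⟨0, ?_⟩⟩
    · intro i; fin_cases i
      · exact nn2' _ _ (by norm_num) (by norm_num)
      · exact nn2' _ _ (by norm_num) (by norm_num)
    · funext j
      fin_cases j <;> simp [Fin.sum_univ_two, A2] <;> norm_num
    · intro i; fin_cases i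
      · simpa [A2] using h.le
      · simpa [A2] using hmix2
    · simpa [A2] using h
  -- concavity + strict monotonicity of u1 give a contradiction
  have hmid : u1 ![(1:ℝ)/2, 1/2] < u1 ![(2:ℝ)/3, 2/3] := by
    refine hu1.2 _ _ (nn2' _ _ (by norm_num) (by norm_num)) ?_
    intro j; fin_cases j <;> norm_num
  have hcm := hc1.2 (mem2 1 0 (by norm_num) (by norm_num))
    (mem2 0 1 (by norm_num) (by norm_num))
    (by norm_num : (0:ℝ) ≤ 1/2) (by norm_num : (0:ℝ) ≤ 1/2) (by norm_num)
  have heq : (1/2 : ℝ) • ![(1:ℝ), 0] + (1/2 : ℝ) • ![(0:ℝ), 1] = ![(1:ℝ)/2, 1/2] := by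
    funext j; fin_cases j <;> simp [smul_eq_mul] <;> norm_num
  rw [heq, smul_eq_mul, smul_eq_mul] at hcm
  linarith

/-- With two agents (agent 1's dataset empty, agent 2's dataset the four
observations `P2, X2`), the group dataset is rationalizable; each of the allocations `A1`
and `A2` is Pareto efficient for some profile of increasing, concave utilities rationalizing
the group dataset; yet no single profile of increasing, concave rationalizing utilities
renders both `A1` and `A2` Pareto efficient. -/
theorem stmt15 :
    ((∃ u1 : (Fin 2 → ℝ) → ℝ, Incr u1) ∧
      (∃ u2 : (Fin 2 → ℝ) → ℝ, Rationalizes P2 X2 u2)) ∧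
    (∃ u1 u2 : (Fin 2 → ℝ) → ℝ,
      Incr u1 ∧ ConcaveOn ℝ {z : Fin 2 → ℝ | 0 ≤ z} u1 ∧
      ConcaveOn ℝ {z : Fin 2 → ℝ | 0 ≤ z} u2 ∧ Rationalizes P2 X2 u2 ∧
      ParetoEff ![u1, u2] A1) ∧
    (∃ u1 u2 : (Fin 2 → ℝ) → ℝ,
      Incr u1 ∧ ConcaveOn ℝ {z : Fin 2 → ℝ | 0 ≤ z} u1 ∧
      ConcaveOn ℝ {z : Fin 2 → ℝ | 0 ≤ z} u2 ∧ Rationalizes P2 X2 u2 ∧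
      ParetoEff ![u1, u2] A2) ∧
    ¬ ∃ u1 u2 : (Fin 2 → ℝ) → ℝ,
      Incr u1 ∧ ConcaveOn ℝ {z : Fin 2 → ℝ | 0 ≤ z} u1 ∧
      ConcaveOn ℝ {z : Fin 2 → ℝ | 0 ≤ z} u2 ∧ Rationalizes P2 X2 u2 ∧
      ParetoEff ![u1, u2] A1 ∧ ParetoEff ![u1, u2] A2 := by
  exact ⟨⟨⟨LA, LA_incr⟩, ⟨U2, U2_rat⟩⟩,
    ⟨LA, U2, LA_incr, LA_concave, U2_concave, U2_rat, eff1⟩,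
    ⟨LB, U2, LB_incr, LB_concave, U2_concave, U2_rat, eff2⟩,
    impossibility⟩
end
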